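/- Let k ⊆ K ⊆ L be fields of characteristic zero such that L/K is a finite Galois extension with Galois group G = Gal(L/K), and let f be a nonzero element of L. Let N(f) = ∏_{σ ∈ G} σ(f) ∈ K be the norm of f (so N(f) = Algebra.norm K f, and N(f) ≠ 0). Then in the module of Kähler differentials Ω_{L/k}, the image of the logarithmic differential N(f)⁻¹ • d_{K/k}(N(f)) ∈ Ω_{K/k} under the canonical map Ω_{K/k} → Ω_{L/k} (induced by the inclusion K → L over k) equals the sum ∑_{σ ∈ G} (σ f)⁻¹ • d_{L/k}(σ f). In other words, d log ∘ N = Tr ∘ d log, where Tr denotes the sum over all Galois conjugates. -/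
import Mathlib

lemma dlog_prod {k L : Type*} [Field k] [Field L] [Algebra k L]
    {ι : Type*} (s : Finset ι) (g : ι → L) (hg : ∀ i ∈ s, g i ≠ 0) :
    (∏ i ∈ s, g i)⁻¹ • KaehlerDifferential.D k L (∏ i ∈ s, g i) =
      ∑ i ∈ s, (g i)⁻¹ • KaehlerDifferential.D k L (g i) := by
  induction s using Finset.cons_induction with
  | empty => simp
  | cons a s ha ih =>
    have h1 : g a ≠ 0 := hg a (Finset.mem_cons_self _ _)
    have h2 : (∏ i ∈ s, g i) ≠ 0 := Finset.prod_ne_zero_iff.mpr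
      (fun i hi => hg i (Finset.mem_cons_of_mem hi))
    rw [Finset.prod_cons, Finset.sum_cons, Derivation.leibniz, mul_inv,
      smul_add, smul_smul, smul_smul,
      ← ih (fun i hi => hg i (Finset.mem_cons_of_mem hi))]
    have e1 : (g a)⁻¹ * (∏ i ∈ s, g i)⁻¹ * g a = (∏ i ∈ s, g i)⁻¹ := by
      field_simp [mul_comm]
    have e2 : (g a)⁻¹ * (∏ i ∈ s, g i)⁻¹ * (∏ i ∈ s, g i) = (g a)⁻¹ := by
      field_simp [mul_comm]
    rw [e1, e2, add_comm]

/-- **d log ∘ N = Tr ∘ d log** (key computation in Lemma 2.1.2).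

Let `k ⊆ K ⊆ L` be fields of characteristic zero with `L/K` a finite Galois
extension with Galois group `G = Gal(L/K)`, and let `f ≠ 0` in `L`.  Writing
`N f = Algebra.norm K f = ∏_{σ ∈ G} σ f ∈ K`, the image of the logarithmic
differential `(N f)⁻¹ • d_{K/k}(N f) ∈ Ω_{K/k}` under the canonical map
`Ω_{K/k} → Ω_{L/k}` equals `∑_{σ ∈ G} (σ f)⁻¹ • d_{L/k}(σ f)`. -/
theorem dlog_norm_eq_trace_dlog
    (k K L : Type*) [Field k] [Field K] [Field L] [CharZero k]
    [Algebra k K] [Algebra k L] [Algebra K L] [IsScalarTower k K L]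
    [FiniteDimensional K L] [IsGalois K L]
    (f : L) (hf : f ≠ 0) :
    KaehlerDifferential.map k k K L
        ((Algebra.norm K f)⁻¹ • KaehlerDifferential.D k K (Algebra.norm K f)) =
      ∑ σ : L ≃ₐ[K] L, (σ f)⁻¹ • KaehlerDifferential.D k L (σ f) := by
  rw [map_smul, KaehlerDifferential.map_D, ← algebraMap_smul L, map_inv₀,
    Algebra.norm_eq_prod_automorphisms]
  exact dlog_prod Finset.univ (fun σ : L ≃ₐ[K] L => σ f)
    (fun σ _ => by simpa using hf)
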